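/- Let Q be a finite-dimensional ℚ-vector space, 𝒱 ⊆ Q a convex cone, 𝒟 ⊆ Q a finite linearly independent set, τ ⊆ 𝒱 a polyhedral cone, and ℱ, ℱ' ⊆ 𝒟. Suppose there exists a linear functional χ on Q with χ ≤ 0 on 𝒱, χ = 0 on τ + ℚ₊·ℱ, and χ > 0 on 𝒟 \ ℱ. Suppose symmetrically there exists χ' with χ' ≤ 0 on 𝒱, χ' = 0 on τ + ℚ₊·ℱ', and χ' > 0 on 𝒟 \ ℱ'. If the relative interior of τ + ℚ₊·ℱ meets 𝒱 and the relative interior of τ + ℚ₊·ℱ' meets 𝒱, and every element of the relative interior of τ + ℚ₊·ℱ' in 𝒱 can be written v₀ + Σ_{d ∈ ℱ'} q_d d with v₀ ∈ τ and q_d > 0, then ℱ = ℱ'. -/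
import Mathlib


/-- Uniqueness of the set of colours in the classification of affine embeddings. -/
theorem stmt_12 (Q : Type*) [AddCommGroup Q] [Module ℚ Q] [FiniteDimensional ℚ Q]
    (𝒱 : Set Q) (𝒟 : Finset Q)
    (hind : LinearIndependent ℚ (fun d : {x : Q // x ∈ 𝒟} => (d : Q)))
    (τ : Set Q) (hτV : τ ⊆ 𝒱)
    (ℱ ℱ' : Finset Q) (hF : ℱ ⊆ 𝒟) (hF' : ℱ' ⊆ 𝒟)
    (χ χ' : Q →ₗ[ℚ] ℚ)
    (hχV : ∀ x ∈ 𝒱, χ x ≤ 0) (hχτ : ∀ x ∈ τ, χ x = 0)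
    (hχF : ∀ d ∈ ℱ, χ d = 0) (hχpos : ∀ d ∈ 𝒟, d ∉ ℱ → 0 < χ d)
    (hχ'V : ∀ x ∈ 𝒱, χ' x ≤ 0) (hχ'τ : ∀ x ∈ τ, χ' x = 0)
    (hχ'F : ∀ d ∈ ℱ', χ' d = 0) (hχ'pos : ∀ d ∈ 𝒟, d ∉ ℱ' → 0 < χ' d)
    (hmeet' : ∃ w ∈ 𝒱, ∃ v₀ ∈ τ, ∃ q : Q → ℚ,
      (∀ d ∈ ℱ', 0 < q d) ∧ w = v₀ + ∑ d ∈ ℱ', q d • d)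
    (hmeet : ∃ w ∈ 𝒱, ∃ v₀ ∈ τ, ∃ q : Q → ℚ,
      (∀ d ∈ ℱ, 0 < q d) ∧ w = v₀ + ∑ d ∈ ℱ, q d • d) :
    ℱ = ℱ' := by
  have key : ∀ (ψ : Q →ₗ[ℚ] ℚ) (F F' : Finset Q), F' ⊆ 𝒟 →
      (∀ x ∈ 𝒱, ψ x ≤ 0) → (∀ x ∈ τ, ψ x = 0) → (∀ d ∈ F, ψ d = 0) →
      (∀ d ∈ 𝒟, d ∉ F → 0 < ψ d) →
      (∃ w ∈ 𝒱, ∃ v₀ ∈ τ, ∃ q : Q → ℚ, (∀ d ∈ F', 0 < q d) ∧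
        w = v₀ + ∑ d ∈ F', q d • d) →
      F' ⊆ F := by
    rintro ψ F F' hF'D hV hτ0 hF0 hpos ⟨w, hwV, v₀, hv₀, q, hq, rfl⟩ d hd
    by_contra hdF
    have h1 : ψ (v₀ + ∑ e ∈ F', q e • e) ≤ 0 := hV _ hwV
    rw [map_add, hτ0 _ hv₀, zero_add, map_sum] at h1
    have h2 : ∀ e ∈ F', 0 ≤ ψ (q e • e) := by
      intro e he
      rw [map_smul, smul_eq_mul]
      by_cases heF : e ∈ F
      · rw [hF0 e heF, mul_zero]
      · exact le_of_lt (mul_pos (hq e he) (hpos e (hF'D he) heF))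
    have h3 : 0 < ψ (q d • d) := by
      rw [map_smul, smul_eq_mul]
      exact mul_pos (hq d hd) (hpos d (hF'D hd) hdF)
    have h4 : 0 < ∑ e ∈ F', ψ (q e • e) :=
      Finset.sum_pos' h2 ⟨d, hd, h3⟩
    linarith
  exact Finset.Subset.antisymm
    (key χ' ℱ' ℱ hF hχ'V hχ'τ hχ'F hχ'pos hmeet)
    (key χ ℱ ℱ' hF' hχV hχτ hχF hχpos hmeet')
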